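/- The set {ξ ↦ |ξ| (ℱφ)(ξ) : φ ∈ 𝒮(ℝⁿ)} is dense in L²(ℝⁿ), where ℱ is the Fourier transform and 𝒮 is the Schwartz space. -/

import Mathlib

/-!
If `h` is smooth, compactly supported and vanishes near the origin, then `ξ ↦ |ξ|⁻¹ h(ξ)` is again
smooth and compactly supported, hence a Schwartz function, and `h = |ξ| ℱφ` for `φ` its inverse
Fourier transform. Such `h` are dense in `L²`: smooth compactly supported `g` are dense, and cutting
`g` off by `1 - β` with `β` a bump of radius `r` at the origin moves it by at most
`‖g‖_∞ vol(B(0, r))^{1/2}` in `L²`, which tends to `0` since points are null for `n ≥ 1`.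
-/

open MeasureTheory FourierTransform Metric Set Filter
open scoped ContDiff Topology ENNReal

theorem tendsto_measure_closedBall_one_div_add_one {E : Type*} [MetricSpace E] [ProperSpace E]
    [MeasurableSpace E] [OpensMeasurableSpace E] (μ : Measure E) [IsFiniteMeasureOnCompacts μ]
    (c : E) : Tendsto (fun k : ℕ => μ (closedBall c (1 / (k + 1)))) atTop (𝓝 (μ {c})) := by
  refine ((tendsto_measure_cthickening_of_isCompact (μ := μ) isCompact_singleton).comp
    tendsto_one_div_add_atTop_nhds_zero_nat).congr fun k => ?_
  simp only [Function.comp_apply]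
  rw [cthickening_singleton _ (by positivity)]

namespace ContDiffBump

variable {E : Type*} [NormedAddCommGroup E] [NormedSpace ℝ E] [HasContDiffBump E]

noncomputable def shrinking (c : E) (k : ℕ) : ContDiffBump c where
  rIn := 1 / (2 * (k + 1))
  rOut := 1 / (k + 1)
  rIn_pos := by positivity
  rIn_lt_rOut := by
    rw [one_div_lt_one_div (by positivity) (by positivity)]
    linarith

theorem eLpNorm_smul_le_of_norm_le {F : Type*} [NormedAddCommGroup F] [NormedSpace ℝ F]
    [MeasurableSpace E] [OpensMeasurableSpace E] {c : E} (β : ContDiffBump c) {g : E → F} {C : ℝ}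
    (hg : ∀ x, ‖g x‖ ≤ C) (p : ℝ≥0∞) (μ : Measure E) :
    eLpNorm (fun x => β x • g x) p μ ≤ ‖C‖ₑ * μ (closedBall c β.rOut) ^ (1 / p.toReal) := by
  refine (eLpNorm_mono fun x => ?_).trans (eLpNorm_indicator_const_le C p)
  by_cases hx : x ∈ closedBall c β.rOut
  · rw [indicator_of_mem hx, norm_smul]
    refine (mul_le_of_le_one_left (norm_nonneg _) ?_).trans ((hg x).trans (le_abs_self C))
    rw [Real.norm_of_nonneg β.nonneg]
    exact β.le_one
  · have : β x = 0 := by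
      rw [← Function.notMem_support, β.support_eq]
      exact fun h => hx (ball_subset_closedBall h)
    simp [this, indicator_of_notMem hx]

variable [MeasurableSpace E] {c : E}

theorem tendsto_eLpNorm_shrinking_smul {F : Type*} [NormedAddCommGroup F] [NormedSpace ℝ F]
    [OpensMeasurableSpace E] [ProperSpace E] {μ : Measure E} [IsFiniteMeasureOnCompacts μ]
    (hc : μ {c} = 0) {p : ℝ≥0∞} (hp0 : p ≠ 0) (hp : p ≠ ⊤) {g : E → F} {C : ℝ}
    (hg : ∀ x, ‖g x‖ ≤ C) :
    Tendsto (fun k => eLpNorm (fun x => shrinking c k x • g x) p μ) atTop (𝓝 0) := by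
  have hexp : 0 < 1 / p.toReal := one_div_pos.mpr (ENNReal.toReal_pos hp0 hp)
  have hbound : Tendsto (fun k => ‖C‖ₑ * μ (closedBall c (shrinking c k).rOut) ^ (1 / p.toReal))
      atTop (𝓝 0) := by
    have := ENNReal.Tendsto.const_mul
      (((ENNReal.continuous_rpow_const (y := 1 / p.toReal)).tendsto 0).comp
        (hc ▸ tendsto_measure_closedBall_one_div_add_one μ c))
      (Or.inr enorm_ne_top) (a := ‖C‖ₑ)
    rwa [ENNReal.zero_rpow_of_pos hexp, mul_zero] at this
  exact tendsto_of_tendsto_of_tendsto_of_le_of_le tendsto_const_nhds hbound (fun _ => zero_le)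
    fun k => (shrinking c k).eLpNorm_smul_le_of_norm_le hg p μ

end ContDiffBump

open ContDiffBump in
theorem MeasureTheory.Lp.dense_hasCompactSupport_contDiff_eventuallyEq_zero
    {E F : Type*} [NormedAddCommGroup E] [NormedSpace ℝ E] [FiniteDimensional ℝ E]
    [MeasurableSpace E] [BorelSpace E] [NormedAddCommGroup F] [NormedSpace ℝ F]
    {μ : Measure E} [IsFiniteMeasureOnCompacts μ] {p : ℝ≥0∞} (hp : p ≠ ⊤) [hp₁ : Fact (1 ≤ p)]
    {c : E} (hc : μ {c} = 0) :
    Dense {f : Lp F p μ | ∃ g : E → F, f =ᵐ[μ] g ∧ HasCompactSupport g ∧ ContDiff ℝ ∞ g ∧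
      g =ᶠ[𝓝 c] 0} := by
  rw [← dense_closure]
  refine (Lp.dense_hasCompactSupport_contDiff hp).mono ?_
  rintro f ⟨g, hfg, hsupp, hsmooth⟩
  obtain ⟨C, hC⟩ := hsmooth.continuous.norm.bounded_above_of_compact_support hsupp.norm
  set cut : ℕ → E → F := fun k x => (1 - shrinking c k x) • g x
  have hcut_supp (k : ℕ) : HasCompactSupport (cut k) := hsupp.smul_left
  have hcut_smooth (k : ℕ) : ContDiff ℝ ∞ (cut k) :=
    (contDiff_const.sub (shrinking c k).contDiff).smul hsmooth
  have hcut_mem (k : ℕ) : MemLp (cut k) p μ :=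
    (hcut_smooth k).continuous.memLp_of_hasCompactSupport (hcut_supp k)
  have hg_mem : MemLp g p μ := hsmooth.continuous.memLp_of_hasCompactSupport hsupp
  have hcut_zero (k : ℕ) : cut k =ᶠ[𝓝 c] 0 := by
    filter_upwards [closedBall_mem_nhds c (shrinking c k).rIn_pos] with x hx
    simp [cut, (shrinking c k).one_of_mem_closedBall hx]
  have hcut_tendsto : Tendsto (fun k => eLpNorm (cut k - g) p μ) atTop (𝓝 0) := by
    have hsub (k : ℕ) : cut k - g = -fun x => shrinking c k x • g x := by
      ext x; simp [cut, sub_smul]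
    simp only [hsub, eLpNorm_neg]
    exact tendsto_eLpNorm_shrinking_smul hc (by have := hp₁.out; positivity) hp
      fun x => by simpa using hC x
  rw [Lp.ext (hfg.trans hg_mem.coeFn_toLp.symm)]
  exact mem_closure_of_tendsto
    ((Lp.tendsto_Lp_iff_tendsto_eLpNorm'' cut hcut_mem g hg_mem).2 hcut_tendsto)
    (Eventually.of_forall fun k =>
      ⟨cut k, (hcut_mem k).coeFn_toLp, hcut_supp k, hcut_smooth k, hcut_zero k⟩)

section NormInvSMul

variable {V : Type*} [NormedAddCommGroup V] [InnerProductSpace ℝ V]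

theorem contDiff_norm_inv_smul_of_eventuallyEq_zero {F : Type*} [NormedAddCommGroup F]
    [NormedSpace ℝ F] {n : WithTop ℕ∞} {h : V → F} (hh : ContDiff ℝ n h) (h0 : h =ᶠ[𝓝 0] 0) :
    ContDiff ℝ n fun x => ‖x‖⁻¹ • h x := by
  rw [contDiff_iff_contDiffAt]
  intro x
  rcases eq_or_ne x 0 with rfl | hx
  · refine contDiffAt_const (c := 0).congr_of_eventuallyEq ?_
    filter_upwards [h0] with y hy
    simp [hy]
  · exact ((contDiffAt_norm ℝ hx).inv (norm_ne_zero_iff.mpr hx)).smul hh.contDiffAt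

theorem exists_schwartzMap_eq_norm_smul_fourier [FiniteDimensional ℝ V] [MeasurableSpace V]
    [BorelSpace V] {E : Type*} [NormedAddCommGroup E] [NormedSpace ℂ E] [CompleteSpace E]
    {h : V → E} (hh : ContDiff ℝ ∞ h) (hsupp : HasCompactSupport h) (h0 : h =ᶠ[𝓝 0] 0) :
    ∃ φ : SchwartzMap V E, ∀ ξ, h ξ = ‖ξ‖ • 𝓕 (φ : V → E) ξ := by
  set ψ : SchwartzMap V E := (hsupp.smul_left (f := fun x : V => ‖x‖⁻¹)).toSchwartzMap
    (contDiff_norm_inv_smul_of_eventuallyEq_zero hh h0)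
  refine ⟨𝓕⁻ ψ, fun ξ => ?_⟩
  rw [← SchwartzMap.fourier_coe, fourier_fourierInv_eq]
  rcases eq_or_ne ξ 0 with rfl | hξ
  · simpa using h0.self_of_nhds
  · simp [ψ, smul_smul, hξ]

end NormInvSMul

/-- The set `{ξ ↦ |ξ| (ℱφ)(ξ) : φ ∈ 𝒮(ℝⁿ)}` is dense in `L²(ℝⁿ)`. -/
theorem dense_abs_mul_fourier_schwartz (n : ℕ) (hn : 1 ≤ n) :
    Dense {g : Lp ℂ 2 (volume : Measure (EuclideanSpace ℝ (Fin n))) |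
      ∃ φ : SchwartzMap (EuclideanSpace ℝ (Fin n)) ℂ,
        ∀ᵐ ξ ∂(volume : Measure (EuclideanSpace ℝ (Fin n))),
          (g : EuclideanSpace ℝ (Fin n) → ℂ) ξ =
            (‖ξ‖ : ℂ) * 𝓕 (φ : EuclideanSpace ℝ (Fin n) → ℂ) ξ} := by
  have : Nonempty (Fin n) := ⟨⟨0, hn⟩⟩
  refine (Lp.dense_hasCompactSupport_contDiff_eventuallyEq_zero (F := ℂ) (p := 2) ENNReal.ofNat_ne_top
    (measure_singleton 0)).mono ?_
  rintro f ⟨g, hfg, hsupp, hsmooth, hzero⟩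
  obtain ⟨φ, hφ⟩ := exists_schwartzMap_eq_norm_smul_fourier hsmooth hsupp hzero
  exact ⟨φ, hfg.trans (Eventually.of_forall fun ξ => by rw [hφ ξ, Complex.real_smul])⟩
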